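/- Let μ be a locally finite Borel measure on ℝⁿ and 0 ≤ α < n. Then the following are equivalent: (1) there exists x₀ ∈ ℝⁿ with M_α μ(x₀) < ∞; (2) the set {x ∈ ℝⁿ : M_α μ(x) = ∞} has ℋ^{n-α}-measure zero. -/

import Mathlib

/-!
If `M_α μ(x₀) < ∞`, then `μ(B(x₀, r)) ≲ r^{n-α}` for every `r`. Moving the centre from `x₀` to `x`
costs only a constant factor on balls of radius at least `δ`, so `M_α μ(x) = ∞` forces
`μ(B(x, r)) / r^{n-α}` to be unbounded as `r → 0`. Such points form an `ℋ^{n-α}`-null set: on a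
bounded piece `A`, a Vitali cover by balls with `c r^{n-α} ≤ μ(B(x, r))` gives
`ℋ^{n-α}(A) ≲ μ(A + B_1) / c` for every `c`. Conversely, `ℋ^{n-α}(ℝⁿ) ≥ ℋ^n(ℝⁿ) > 0`, so a null
set is not all of `ℝⁿ`.
-/

open MeasureTheory
open scoped ENNReal

/-- The fractional maximal function `M_α μ(x) = sup_{r>0} r^α μ(B_r(x))/|B_r(x)|`. -/
noncomputable def fracMax (n : ℕ) (α : ℝ) (μ : Measure (EuclideanSpace ℝ (Fin n)))
    (x : EuclideanSpace ℝ (Fin n)) : ℝ≥0∞ :=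
  ⨆ (r : ℝ) (_ : 0 < r),
    ENNReal.ofReal (r ^ α) * μ (Metric.ball x r) / volume (Metric.ball x r)

open Metric Set Filter
open scoped NNReal Topology

section PseudoMetric

variable {X : Type*} [PseudoMetricSpace X]

lemma ediam_closedBall_le_ofReal (x : X) {r : ℝ} (hr : 0 ≤ r) :
    ediam (closedBall x r) ≤ ENNReal.ofReal (2 * r) := by
  rw [← closedEBall_ofReal hr, ENNReal.ofReal_mul zero_le_two, ENNReal.ofReal_ofNat]
  exact ediam_closedEBall_le

lemma exists_countable_pairwiseDisjoint_ball_covering [TopologicalSpace.SeparableSpace X]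
    {A : Set X} (P : X → ℝ → Prop) (hA : ∀ x ∈ A, ∃ᶠ r in 𝓝[>] 0, P x r) {R : ℝ} (hR : 0 < R) :
    ∃ u ⊆ A, ∃ ρ : X → ℝ, u.Countable ∧ u.PairwiseDisjoint (fun x => ball x (ρ x)) ∧
      A ⊆ ⋃ x ∈ u, closedBall x (4 * ρ x) ∧ ∀ x ∈ A, ρ x ∈ Ioo 0 R ∧ P x (ρ x) := by
  have hsmall : ∀ x ∈ A, ∃ r, r ∈ Ioo 0 R ∧ P x r := fun x hx =>
    ((hA x hx).and_eventually (Ioo_mem_nhdsGT hR)).exists.imp fun _ h => h.symm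
  choose! ρ hρ using hsmall
  obtain ⟨u, huA, hdisj, hcover⟩ :=
    Vitali.exists_disjoint_subfamily_covering_enlargement_closedBall A id ρ R
      (fun x hx => (hρ x hx).1.2.le) 4 (by norm_num)
  have hdisj' : u.PairwiseDisjoint (fun x => ball x (ρ x)) :=
    hdisj.mono_on fun _ _ => ball_subset_closedBall
  refine ⟨u, huA, ρ, ?_, hdisj', fun x hx => ?_, hρ⟩
  · exact hdisj'.countable_of_isOpen (fun _ _ => isOpen_ball)
      fun x hx => nonempty_ball.2 (hρ x (huA hx)).1.1
  · obtain ⟨y, hy, hxy⟩ := hcover x hx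
    exact mem_biUnion hy (hxy (mem_closedBall_self (hρ x hx).1.1.le))

variable [MeasurableSpace X] {s : ℝ}

noncomputable def unboundedDensitySet (μ : Measure X) (s : ℝ) : Set X :=
  {x | ∀ c : ℝ≥0, ∃ᶠ r in 𝓝[>] 0, c * ENNReal.ofReal (r ^ s) ≤ μ (ball x r)}

noncomputable def ballDensitySup (μ : Measure X) (s : ℝ) (x : X) : ℝ≥0∞ :=
  ⨆ (r : ℝ) (_ : 0 < r), μ (ball x r) / ENNReal.ofReal (r ^ s)

variable (μ : Measure X)

lemma measure_ball_le_ballDensitySup_mul (x : X) {r : ℝ} (hr : 0 < r) :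
    μ (ball x r) ≤ ballDensitySup μ s x * ENNReal.ofReal (r ^ s) :=
  (ENNReal.div_le_iff (ENNReal.ofReal_pos.2 (Real.rpow_pos_of_pos hr s)).ne'
    ENNReal.ofReal_ne_top).1 <|
      le_iSup₂ (f := fun r (_ : 0 < r) => μ (ball x r) / ENNReal.ofReal (r ^ s)) r hr

lemma ballDensitySup_le {x : X} {K : ℝ≥0∞}
    (h : ∀ r > 0, μ (ball x r) ≤ K * ENNReal.ofReal (r ^ s)) : ballDensitySup μ s x ≤ K :=
  iSup₂_le fun r hr => (ENNReal.div_le_iff (ENNReal.ofReal_pos.2 (Real.rpow_pos_of_pos hr s)).ne'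
    ENNReal.ofReal_ne_top).2 (h r hr)

lemma setOf_ballDensitySup_eq_top_subset_unboundedDensitySet (hs : 0 ≤ s) {x₀ : X}
    (hx₀ : ballDensitySup μ s x₀ ≠ ∞) :
    {x | ballDensitySup μ s x = ∞} ⊆ unboundedDensitySet μ s := by
  intro x hx
  by_contra hx'
  simp only [unboundedDensitySet, mem_ofPred_eq, not_forall, not_frequently, not_le] at hx'
  obtain ⟨c, hc⟩ := hx'
  obtain ⟨δ, hδ : 0 < δ, hsmall⟩ := mem_nhdsGT_iff_exists_Ioo_subset.1 hc
  set G := ballDensitySup μ s x₀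
  set d := dist x x₀
  have hd : 0 ≤ d := dist_nonneg
  set K := max (c : ℝ≥0∞) (G * ENNReal.ofReal ((1 + d / δ) ^ s))
  have hgrowth : ∀ r ≥ δ, (r + d) ^ s ≤ (1 + d / δ) ^ s * r ^ s := fun r hr => by
    rw [← Real.mul_rpow (by positivity) (by linarith)]
    refine Real.rpow_le_rpow (by linarith) ?_ hs
    have : d ≤ d / δ * r := by
      rw [div_mul_eq_mul_div, le_div_iff₀ hδ]
      nlinarith
    linarith
  have hK : ballDensitySup μ s x ≤ K := ballDensitySup_le μ fun r hr => by
    rcases lt_or_ge r δ with hrδ | hδr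
    · exact (hsmall ⟨hr, hrδ⟩).le.trans (by gcongr; exact le_max_left _ _)
    calc μ (ball x r) ≤ μ (ball x₀ (r + d)) := measure_mono (ball_subset_ball' le_rfl)
      _ ≤ G * ENNReal.ofReal ((r + d) ^ s) :=
        measure_ball_le_ballDensitySup_mul μ x₀ (by positivity)
      _ ≤ G * ENNReal.ofReal ((1 + d / δ) ^ s) * ENNReal.ofReal (r ^ s) := by
        rw [mul_assoc, ← ENNReal.ofReal_mul (by positivity)]
        gcongr
        exact hgrowth r hδr
      _ ≤ K * ENNReal.ofReal (r ^ s) := by gcongr; exact le_max_right _ _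
  exact (hK.trans_lt (max_lt ENNReal.coe_lt_top
    (ENNReal.mul_lt_top hx₀.lt_top ENNReal.ofReal_lt_top))).ne hx

end PseudoMetric

section Hausdorff

variable {X : Type*} [MetricSpace X] [MeasurableSpace X] [BorelSpace X] {s : ℝ}

lemma hausdorffMeasure_le_of_forall_exists_cover {A : Set X} {K : ℝ≥0∞}
    (h : ∀ ε > 0, ∃ u : Set X, ∃ t : X → Set X, u.Countable ∧ A ⊆ ⋃ x ∈ u, t x ∧
      (∀ x ∈ u, ediam (t x) ≤ ENNReal.ofReal ε) ∧ ∑' x : u, ediam (t x) ^ s ≤ K) :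
    μH[s] A ≤ K := by
  choose u t hu hcover hdiam hsum using fun b : ℕ => h (1 / (b + 1)) Nat.one_div_pos_of_nat
  have : ∀ b, Countable (u b) := fun b => (hu b).to_subtype
  have hscale : Tendsto (fun b : ℕ => ENNReal.ofReal (1 / (b + 1))) atTop (𝓝 0) := by
    simpa using ENNReal.tendsto_ofReal tendsto_one_div_add_atTop_nhds_zero_nat
  calc μH[s] A ≤ liminf (fun b => ∑' x : u b, ediam (t b x) ^ s) atTop :=
        Measure.hausdorffMeasure_le_liminf_tsum s A _ hscale (fun b (x : u b) => t b x)
          (.of_forall fun b x => hdiam b x x.2)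
          (.of_forall fun b => (hcover b).trans fun y hy => by
            obtain ⟨x, hx, hyx⟩ := mem_iUnion₂.1 hy
            exact mem_iUnion.2 ⟨⟨x, hx⟩, hyx⟩)
    _ ≤ K := liminf_le_of_frequently_le' (.of_forall hsum)

lemma hausdorffMeasure_le_of_frequently_le_measure_ball [TopologicalSpace.SeparableSpace X]
    (μ : Measure X) (hs : 0 ≤ s) {A : Set X} {c : ℝ≥0} (hc : c ≠ 0)
    (hA : ∀ x ∈ A, ∃ᶠ r in 𝓝[>] 0, c * ENNReal.ofReal (r ^ s) ≤ μ (ball x r)) {R : ℝ}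
    (hR : 0 < R) :
    μH[s] A ≤ ENNReal.ofReal (8 ^ s) * μ (thickening R A) / c := by
  refine hausdorffMeasure_le_of_forall_exists_cover fun ε hε => ?_
  obtain ⟨u, huA, ρ, hu, hdisj, hcover, hρ⟩ :=
    exists_countable_pairwiseDisjoint_ball_covering _ hA (lt_min hR (by positivity : 0 < ε / 8))
  have hdiam : ∀ x ∈ u, ediam (closedBall x (4 * ρ x)) ≤ ENNReal.ofReal (8 * ρ x) := fun x hx =>
    (ediam_closedBall_le_ofReal x (by linarith [(hρ x (huA hx)).1.1])).trans_eq (by ring_nf)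
  refine ⟨u, fun x => closedBall x (4 * ρ x), hu, hcover, fun x hx => ?_, ?_⟩
  · refine (hdiam x hx).trans (ENNReal.ofReal_le_ofReal ?_)
    linarith [(hρ x (huA hx)).1.2.trans_le (min_le_right _ _)]
  have hterm : ∀ x : u, ediam (closedBall (x : X) (4 * ρ x)) ^ s ≤
      ENNReal.ofReal (8 ^ s) * (μ (ball (x : X) (ρ x)) / c) := fun x => by
    obtain ⟨⟨hρ0, -⟩, hμ⟩ := hρ x (huA x.2)
    calc ediam (closedBall (x : X) (4 * ρ x)) ^ s ≤ ENNReal.ofReal (8 * ρ x) ^ s :=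
          ENNReal.rpow_le_rpow (hdiam x x.2) hs
      _ = ENNReal.ofReal (8 ^ s) * ENNReal.ofReal (ρ x ^ s) := by
          rw [ENNReal.ofReal_rpow_of_nonneg (by positivity) hs, Real.mul_rpow (by norm_num)
            hρ0.le, ENNReal.ofReal_mul (by positivity)]
      _ ≤ ENNReal.ofReal (8 ^ s) * (μ (ball (x : X) (ρ x)) / c) := by
          gcongr
          rw [ENNReal.le_div_iff_mul_le (.inl (by simpa using hc)) (.inl (by simp)), mul_comm]
          exact hμ
  have hballs : (⋃ x ∈ u, ball x (ρ x)) ⊆ thickening R A := iUnion₂_subset fun x hx =>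
    (ball_subset_ball ((hρ x (huA hx)).1.2.le.trans (min_le_left _ _))).trans
      (ball_subset_thickening (huA hx) R)
  calc ∑' x : u, ediam (closedBall (x : X) (4 * ρ x)) ^ s
      ≤ ∑' x : u, ENNReal.ofReal (8 ^ s) * (μ (ball (x : X) (ρ x)) / c) :=
        ENNReal.tsum_le_tsum hterm
    _ = ENNReal.ofReal (8 ^ s) * μ (⋃ x ∈ u, ball x (ρ x)) / c := by
        rw [measure_biUnion hu hdisj fun _ _ => measurableSet_ball]
        simp only [div_eq_mul_inv, ENNReal.tsum_mul_left, ENNReal.tsum_mul_right, mul_assoc]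
    _ ≤ ENNReal.ofReal (8 ^ s) * μ (thickening R A) / c := by gcongr

lemma hausdorffMeasure_unboundedDensitySet_eq_zero [ProperSpace X] (μ : Measure X)
    [IsLocallyFiniteMeasure μ] (hs : 0 ≤ s) : μH[s] (unboundedDensitySet μ s) = 0 := by
  refine measure_null_of_locally_null _ fun x _ =>
    ⟨_, inter_mem_nhdsWithin _ (ball_mem_nhds x one_pos), ?_⟩
  set A := unboundedDensitySet μ s ∩ ball x 1
  set K := ENNReal.ofReal (8 ^ s) * μ (thickening 1 A)
  have hK : K ≠ ∞ := ENNReal.mul_ne_top ENNReal.ofReal_ne_top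
    (isBounded_ball.subset inter_subset_right).thickening.measure_lt_top.ne
  have hbound : ∀ c : ℝ≥0, c ≠ 0 → μH[s] A ≤ K / c := fun c hc =>
    hausdorffMeasure_le_of_frequently_le_measure_ball μ hs hc (fun y hy => hy.1 c) one_pos
  have hlim : Tendsto (fun k : ℕ => K / (k : ℝ≥0)) atTop (𝓝 0) := by
    simpa using ENNReal.Tendsto.const_div ENNReal.tendsto_nat_nhds_top (.inr hK)
  exact nonpos_iff_eq_zero.1 <| ge_of_tendsto hlim <|
    eventually_atTop.2 ⟨1, fun k hk => hbound k (by positivity)⟩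

end Hausdorff

lemma hausdorffMeasure_univ_ne_zero {E : Type*} [NormedAddCommGroup E] [NormedSpace ℝ E]
    [FiniteDimensional ℝ E] [MeasurableSpace E] [BorelSpace E] {s : ℝ}
    (hs : s ≤ Module.finrank ℝ E) : μH[s] (univ : Set E) ≠ 0 :=
  ((Measure.measure_univ_pos.2 (NeZero.ne _)).trans_le (Measure.hausdorffMeasure_mono hs univ)).ne'

lemma fracMax_eq_ballDensitySup_div (n : ℕ) (α : ℝ) (μ : Measure (EuclideanSpace ℝ (Fin n)))
    (x : EuclideanSpace ℝ (Fin n)) :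
    fracMax n α μ x =
      ballDensitySup μ (n - α) x / volume (ball (0 : EuclideanSpace ℝ (Fin n)) 1) := by
  simp only [fracMax, ballDensitySup, ENNReal.iSup_div]
  refine iSup_congr fun r => iSup_congr fun hr => ?_
  have hpos : ∀ t : ℝ, ENNReal.ofReal (r ^ t) ≠ 0 := fun t =>
    (ENNReal.ofReal_pos.2 (Real.rpow_pos_of_pos hr t)).ne'
  have hsplit :
      ENNReal.ofReal (r ^ n) = ENNReal.ofReal (r ^ α) * ENNReal.ofReal (r ^ ((n : ℝ) - α)) := by
    rw [← ENNReal.ofReal_mul (Real.rpow_nonneg hr.le α), ← Real.rpow_add hr, add_sub_cancel,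
      Real.rpow_natCast]
  rw [Measure.addHaar_ball_of_pos volume x hr, finrank_euclideanSpace_fin, hsplit, mul_assoc,
    ENNReal.mul_div_mul_left _ _ (hpos α) ENNReal.ofReal_ne_top, div_eq_mul_inv, div_eq_mul_inv,
    div_eq_mul_inv, ENNReal.mul_inv (.inl (hpos _)) (.inl ENNReal.ofReal_ne_top), mul_assoc]

theorem fracMax_finite_iff (n : ℕ) (α : ℝ) (hα : 0 ≤ α) (hαn : α < n)
    (μ : Measure (EuclideanSpace ℝ (Fin n))) [IsLocallyFiniteMeasure μ] :
    (∃ x₀ : EuclideanSpace ℝ (Fin n), fracMax n α μ x₀ < ⊤) ↔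
      μH[(n : ℝ) - α] {x : EuclideanSpace ℝ (Fin n) | fracMax n α μ x = ⊤} = 0 := by
  have hs : 0 ≤ (n : ℝ) - α := sub_nonneg.2 hαn.le
  have hM : ∀ x, fracMax n α μ x = ⊤ ↔ ballDensitySup μ (n - α) x = ⊤ := fun x => by
    simp [fracMax_eq_ballDensitySup_div, ENNReal.div_eq_top,
      (measure_ball_pos volume _ one_pos).ne', measure_ball_lt_top.ne]
  constructor
  · rintro ⟨x₀, hx₀⟩
    refine measure_mono_null (fun x hx => ?_) (hausdorffMeasure_unboundedDensitySet_eq_zero μ hs)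
    exact setOf_ballDensitySup_eq_top_subset_unboundedDensitySet μ hs ((hM x₀).not.1 hx₀.ne)
      ((hM x).1 hx)
  · intro h
    obtain ⟨x₀, hx₀⟩ : {x | fracMax n α μ x = ⊤}ᶜ.Nonempty := by
      refine nonempty_compl.2 fun huniv => hausdorffMeasure_univ_ne_zero ?_ (huniv ▸ h)
      simpa [finrank_euclideanSpace_fin] using hα
    exact ⟨x₀, lt_top_iff_ne_top.2 hx₀⟩
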